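/- For a prime p and the polynomial f = x³ + y³ + z³ over 𝔽_p with p ≠ 3: the coefficient of x^{p−1}y^{p−1}z^{p−1} in f^{p−1} is nonzero in 𝔽_p if and only if p ≡ 1 (mod 3). -/

import Mathlib

/-!
Since `x³ + y³ + z³` is `x + y + z` with every variable replaced by its cube, the coefficient of
`x^{p-1} y^{p-1} z^{p-1}` in its `(p-1)`-th power vanishes unless `3 ∣ p - 1`; when `p - 1 = 3t`
it is the multinomial coefficient `(p-1)! / (t!)³`, which is prime to `p` because `p ∤ (p-1)!`.
-/

theorem Nat.Prime.not_dvd_multinomial {α : Type*} {p : ℕ} (hp : p.Prime) {s : Finset α}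
    {f : α → ℕ} (hsum : ∑ i ∈ s, f i < p) : ¬ p ∣ Nat.multinomial s f := fun hdvd =>
  hsum.not_ge <| hp.dvd_factorial.mp <|
    Nat.multinomial_spec s f ▸ dvd_mul_of_dvd_right hdvd _

theorem Nat.Prime.not_dvd_finsupp_multinomial {α : Type*} {p : ℕ} (hp : p.Prime) {f : α →₀ ℕ}
    (hsum : f.sum (fun _ k => k) < p) : ¬ p ∣ f.multinomial := by
  rw [Finsupp.multinomial_eq]
  exact hp.not_dvd_multinomial hsum

namespace MvPolynomial

variable {R σ : Type*} [CommSemiring R] [Fintype σ]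

theorem sum_X_pow_pow_eq_expand (d n : ℕ) :
    (∑ i, X i ^ d : MvPolynomial σ R) ^ n = expand d ((∑ i, X i) ^ n) := by
  simp only [map_pow, map_sum, expand_X]

theorem coeff_smul_pow_sum_X_pow {d : ℕ} (hd : d ≠ 0) (m : σ →₀ ℕ) (n : ℕ) :
    coeff (d • m) ((∑ i, X i ^ d : MvPolynomial σ R) ^ n) =
      if m.sum (fun _ k => k) = n then (m.multinomial : R) else 0 := by
  rw [sum_X_pow_pow_eq_expand, coeff_expand_smul d hd, coeff_sum_X_pow_of_fintype,
    Nat.cast_ite, Nat.cast_zero]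

theorem coeff_pow_sum_X_pow_of_not_dvd {d : ℕ} {m : σ →₀ ℕ} {i : σ} (h : ¬ d ∣ m i) (n : ℕ) :
    coeff m ((∑ i, X i ^ d : MvPolynomial σ R) ^ n) = 0 := by
  rw [sum_X_pow_pow_eq_expand, coeff_expand_of_not_dvd _ h]

end MvPolynomial

open MvPolynomial

theorem coeff_pow_fermatCubic_ne_zero_iff_general (p : ℕ) (hp : p.Prime) :
    MvPolynomial.coeff (Finsupp.equivFunOnFinite.symm fun _ : Fin 3 => p - 1)
      (((X 0 : MvPolynomial (Fin 3) (ZMod p)) ^ 3 + X 1 ^ 3 + X 2 ^ 3) ^ (p - 1))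
      ≠ 0 ↔ p % 3 = 1 := by
  rw [← Fin.sum_univ_three fun i => (X i : MvPolynomial (Fin 3) (ZMod p)) ^ 3]
  have hp2 := hp.two_le
  by_cases hmod : p % 3 = 1
  · obtain ⟨t, ht⟩ : 3 ∣ p - 1 := by omega
    set c : Fin 3 →₀ ℕ := Finsupp.equivFunOnFinite.symm fun _ => t
    have hc : c.sum (fun _ k => k) = p - 1 := by
      simp [c, Finsupp.sum_fintype, ht]
    have hm : (Finsupp.equivFunOnFinite.symm fun _ : Fin 3 => p - 1) = 3 • c := by
      ext; simp [c, ht]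
    rw [hm, coeff_smul_pow_sum_X_pow three_ne_zero, if_pos hc, Ne,
      ZMod.natCast_eq_zero_iff]
    exact iff_of_true (hp.not_dvd_finsupp_multinomial (by omega)) hmod
  · refine iff_of_false (not_not.mpr (coeff_pow_sum_X_pow_of_not_dvd (i := 0) ?_ _)) hmod
    simp only [Finsupp.coe_equivFunOnFinite_symm]
    omega

theorem coeff_pow_fermatCubic_ne_zero_iff (p : ℕ) (hp : p.Prime) (hp3 : p ≠ 3) :
    MvPolynomial.coeff (Finsupp.equivFunOnFinite.symm fun _ : Fin 3 => p - 1)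
      (((X 0 : MvPolynomial (Fin 3) (ZMod p)) ^ 3 + X 1 ^ 3 + X 2 ^ 3) ^ (p - 1))
      ≠ 0 ↔ p % 3 = 1 :=
  coeff_pow_fermatCubic_ne_zero_iff_general p hp
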